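/- Let V₀, V₁, U* ∈ S++^n, K_i = V_i ⊗ U*, and let γ_{A→B}(t) = ((1−t)I + tT_{A→B}) A ((1−t)I + tT_{A→B}) with T_{A→B} = A^{−1/2}(A^{1/2}BA^{1/2})^{1/2}A^{−1/2} denote the Bures geodesic. Then γ_{K₀→K₁}(t) = γ_{V₀→V₁}(t) ⊗ U* for all t ∈ [0,1]. -/

import Mathlib

/-!
Since `√(A ⊗ U) = √A ⊗ √U`, the matrix under the outer root in the transport map of
`A ⊗ U → B ⊗ U` is `(√A B √A) ⊗ (√U U √U)`, whose root is `√(√A B √A) ⊗ U`.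
The outer factors `(√U)⁻¹` then cancel `U`, so the ambient transport map is
`T_{A→B} ⊗ I`, and the mixed-product rule splits the whole geodesic.
-/

open Matrix Kronecker

/-- The positive semidefinite square root of a positive semidefinite matrix,
extended by `0` to all matrices.  On symmetric positive definite matrices this
is the unique symmetric positive definite square root. -/
noncomputable def matSqrt {m : Type*} [Fintype m] [DecidableEq m]
    (A : Matrix m m ℝ) : Matrix m m ℝ :=
  open scoped Classical in
  if h : A.PosSemidef then
    (h.1.eigenvectorUnitary : Matrix m m ℝ) * diagonal (fun i => Real.sqrt (h.1.eigenvalues i)) *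
      (star h.1.eigenvectorUnitary : Matrix m m ℝ) else 0

/-- The Bures geodesic `γ_{A→B}(t) = ((1−t)I + tT) A ((1−t)I + tT)` with
`T = A^{−1/2}(A^{1/2}BA^{1/2})^{1/2}A^{−1/2}`. -/
noncomputable def buresGeodesic {m : Type*} [Fintype m] [DecidableEq m]
    (A B : Matrix m m ℝ) (t : ℝ) : Matrix m m ℝ :=
  ((1 - t) • (1 : Matrix m m ℝ)
      + t • ((matSqrt A)⁻¹ * matSqrt (matSqrt A * B * matSqrt A) * (matSqrt A)⁻¹))
    * A *
  ((1 - t) • (1 : Matrix m m ℝ)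
      + t • ((matSqrt A)⁻¹ * matSqrt (matSqrt A * B * matSqrt A) * (matSqrt A)⁻¹))

section MatSqrt

variable {m p : Type*} [Fintype m] [DecidableEq m] [Fintype p] [DecidableEq p]

open scoped MatrixOrder

lemma matSqrt_eq_sqrt {A : Matrix m m ℝ} (hA : A.PosSemidef) : matSqrt A = CFC.sqrt A := by
  rw [matSqrt, dif_pos hA, CFC.sqrt_eq_cfc, cfc_nnreal_eq_real _ A, hA.1.cfc_eq]
  simp only [IsHermitian.cfc, Unitary.conjStarAlgAut_apply, Real.coe_sqrt, Real.coe_toNNReal']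
  congr 3
  ext i
  simp [max_eq_left (hA.eigenvalues_nonneg i)]

lemma posSemidef_matSqrt {A : Matrix m m ℝ} (hA : A.PosSemidef) : (matSqrt A).PosSemidef := by
  rw [matSqrt_eq_sqrt hA]
  exact (CFC.sqrt_nonneg A).posSemidef

lemma matSqrt_mul_self {A : Matrix m m ℝ} (hA : A.PosSemidef) : matSqrt A * matSqrt A = A := by
  rw [matSqrt_eq_sqrt hA]
  exact CFC.sqrt_mul_sqrt_self A hA.nonneg

lemma matSqrt_eq_of_mul_self {A B : Matrix m m ℝ} (hB : B.PosSemidef) (h : B * B = A) :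
    matSqrt A = B := by
  have hA : A.PosSemidef := by
    simpa only [hB.isHermitian.eq, h] using posSemidef_conjTranspose_mul_self B
  rw [matSqrt_eq_sqrt hA]
  exact CFC.sqrt_unique h hB.nonneg

lemma isUnit_det_matSqrt {A : Matrix m m ℝ} (hA : A.PosDef) : IsUnit (matSqrt A).det := by
  rw [← isUnit_iff_isUnit_det, matSqrt_eq_sqrt hA.posSemidef,
    CFC.isUnit_sqrt_iff A hA.posSemidef.nonneg]
  exact hA.isUnit

lemma matSqrt_kronecker {A : Matrix m m ℝ} {U : Matrix p p ℝ}
    (hA : A.PosSemidef) (hU : U.PosSemidef) :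
    matSqrt (A ⊗ₖ U) = matSqrt A ⊗ₖ matSqrt U :=
  matSqrt_eq_of_mul_self ((posSemidef_matSqrt hA).kronecker (posSemidef_matSqrt hU))
    (by rw [← mul_kronecker_mul, matSqrt_mul_self hA, matSqrt_mul_self hU])

lemma posSemidef_matSqrt_mul_mul_matSqrt {A B : Matrix m m ℝ}
    (hA : A.PosSemidef) (hB : B.PosSemidef) : (matSqrt A * B * matSqrt A).PosSemidef := by
  simpa only [(posSemidef_matSqrt hA).isHermitian.eq] using
    hB.mul_mul_conjTranspose_same (matSqrt A)

lemma matSqrt_matSqrt_mul_self_mul_matSqrt {A : Matrix m m ℝ} (hA : A.PosSemidef) :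
    matSqrt (matSqrt A * A * matSqrt A) = A := by
  refine matSqrt_eq_of_mul_self hA ?_
  have hS := matSqrt_mul_self hA
  calc A * A = matSqrt A * matSqrt A * (matSqrt A * matSqrt A) := by rw [hS]
    _ = matSqrt A * (matSqrt A * matSqrt A) * matSqrt A := by simp only [mul_assoc]
    _ = matSqrt A * A * matSqrt A := by rw [hS]

lemma inv_matSqrt_mul_self_mul_inv_matSqrt {A : Matrix m m ℝ} (hA : A.PosDef) :
    (matSqrt A)⁻¹ * A * (matSqrt A)⁻¹ = 1 := by
  have hS := isUnit_det_matSqrt hA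
  calc (matSqrt A)⁻¹ * A * (matSqrt A)⁻¹
      = (matSqrt A)⁻¹ * (matSqrt A * matSqrt A) * (matSqrt A)⁻¹ := by
        rw [matSqrt_mul_self hA.posSemidef]
    _ = ((matSqrt A)⁻¹ * matSqrt A) * (matSqrt A * (matSqrt A)⁻¹) := by simp only [mul_assoc]
    _ = 1 := by rw [nonsing_inv_mul _ hS, mul_nonsing_inv _ hS, one_mul]

end MatSqrt

section Bures

variable {m p : Type*} [Fintype m] [DecidableEq m] [Fintype p] [DecidableEq p]

noncomputable def buresTransport (A B : Matrix m m ℝ) : Matrix m m ℝ :=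
  (matSqrt A)⁻¹ * matSqrt (matSqrt A * B * matSqrt A) * (matSqrt A)⁻¹

lemma buresGeodesic_eq_transport (A B : Matrix m m ℝ) (t : ℝ) :
    buresGeodesic A B t =
      ((1 - t) • 1 + t • buresTransport A B) * A * ((1 - t) • 1 + t • buresTransport A B) :=
  rfl

lemma buresTransport_kronecker {A B : Matrix m m ℝ} {U : Matrix p p ℝ}
    (hA : A.PosSemidef) (hB : B.PosSemidef) (hU : U.PosDef) :
    buresTransport (A ⊗ₖ U) (B ⊗ₖ U) = buresTransport A B ⊗ₖ 1 := by
  have hmid : matSqrt (matSqrt (A ⊗ₖ U) * (B ⊗ₖ U) * matSqrt (A ⊗ₖ U))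
      = matSqrt (matSqrt A * B * matSqrt A) ⊗ₖ U := by
    rw [matSqrt_kronecker hA hU.posSemidef, ← mul_kronecker_mul, ← mul_kronecker_mul,
      matSqrt_kronecker (posSemidef_matSqrt_mul_mul_matSqrt hA hB)
        (posSemidef_matSqrt_mul_mul_matSqrt hU.posSemidef hU.posSemidef),
      matSqrt_matSqrt_mul_self_mul_matSqrt hU.posSemidef]
  rw [buresTransport, hmid, matSqrt_kronecker hA hU.posSemidef, inv_kronecker,
    ← mul_kronecker_mul, ← mul_kronecker_mul, inv_matSqrt_mul_self_mul_inv_matSqrt hU,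
    buresTransport]

lemma buresGeodesic_kronecker {A B : Matrix m m ℝ} {U : Matrix p p ℝ}
    (hA : A.PosSemidef) (hB : B.PosSemidef) (hU : U.PosDef) (t : ℝ) :
    buresGeodesic (A ⊗ₖ U) (B ⊗ₖ U) t = buresGeodesic A B t ⊗ₖ U := by
  have hfactor : (1 - t) • (1 : Matrix (m × p) (m × p) ℝ) + t • (buresTransport A B ⊗ₖ 1)
      = ((1 - t) • 1 + t • buresTransport A B) ⊗ₖ (1 : Matrix p p ℝ) := by
    rw [← one_kronecker_one, add_kronecker, smul_kronecker, smul_kronecker]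
  rw [buresGeodesic_eq_transport, buresGeodesic_eq_transport,
    buresTransport_kronecker hA hB hU, hfactor, ← mul_kronecker_mul, ← mul_kronecker_mul,
    mul_one, one_mul]

end Bures

theorem bures_geodesic_factor_leaf_general {n : ℕ}
    (V₀ V₁ Ustar : Matrix (Fin n) (Fin n) ℝ)
    (hV₀ : V₀.PosDef) (hV₁ : V₁.PosDef) (hU : Ustar.PosDef)
    (t : ℝ) :
    buresGeodesic (V₀ ⊗ₖ Ustar) (V₁ ⊗ₖ Ustar) t
      = (buresGeodesic V₀ V₁ t) ⊗ₖ Ustar :=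
  buresGeodesic_kronecker hV₀.posSemidef hV₁.posSemidef hU t

/-- The factor leaf `{V ⊗ U*}` is geodesically closed: the ambient Bures
geodesic between `V₀ ⊗ U*` and `V₁ ⊗ U*` is the factor geodesic tensored
with `U*`. -/
theorem bures_geodesic_factor_leaf {n : ℕ}
    (V₀ V₁ Ustar : Matrix (Fin n) (Fin n) ℝ)
    (hV₀ : V₀.PosDef) (hV₁ : V₁.PosDef) (hU : Ustar.PosDef)
    (t : ℝ) (ht : t ∈ Set.Icc (0 : ℝ) 1) :
    buresGeodesic (V₀ ⊗ₖ Ustar) (V₁ ⊗ₖ Ustar) t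
      = (buresGeodesic V₀ V₁ t) ⊗ₖ Ustar :=
  bures_geodesic_factor_leaf_general V₀ V₁ Ustar hV₀ hV₁ hU t
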